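/- Let F be any field and k ∈ ℕ. If γ ∈ P(V^{k+2}) is graph-like and IM_{k+2}^F-stable, then its k-projection pr_k γ is C_k-stable. -/

import Mathlib

open Classical Matrix

noncomputable section

/-- `k`-tuples of elements of `V`. -/
abbrev Tup (V : Type) (k : ℕ) := Fin k → V

variable {V : Type}

/-- `v⟨i,x⟩` : the tuple obtained from `v` by substituting, for each `s`,
the entry of `v` in position `i s` by `x s`. -/
def substTup {k r : ℕ} (v : Tup V k) (i : Fin r → Fin k) (x : Tup V r) : Tup V k :=
  fun j => if h : ∃ s, i s = j then x h.choose else v j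

/-- `pr_j v = (v_{j 1}, …, v_{j r})`. -/
def prTup {k r : ℕ} (j : Fin r → Fin k) (v : Tup V k) : Tup V r := fun s => v (j s)

/-- `(w_1, …, w_r, w_r, …, w_r) : V^k`. -/
def extendTup [Nonempty V] {r : ℕ} (k : ℕ) (w : Tup V r) : Tup V k := fun i =>
  if h : (i : ℕ) < r then w ⟨i, h⟩
  else if h' : 0 < r then w ⟨r - 1, by omega⟩
  else Classical.arbitrary V

/-- The `r`-projection `pr_r γ` of a labelled partition (presented as a setoid) of `V^k`. -/
def prPart [Nonempty V] {k : ℕ} (r : ℕ) (γ : Setoid (Tup V k)) : Setoid (Tup V r) where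
  r w w' := γ.r (extendTup k w) (extendTup k w')
  iseqv := ⟨fun _ => γ.iseqv.refl _, fun h => γ.iseqv.symm h, fun h h' => γ.iseqv.trans h h'⟩

/-- `v^τ`, the tuple with `i`-th entry `v (τ⁻¹ i)`. -/
def permTup {k : ℕ} (τ : Equiv.Perm (Fin k)) (v : Tup V k) : Tup V k := fun i => v (τ.symm i)

/-- `γ ⪯ ρ` : the partition `ρ` refines the partition `γ`. -/
def Refines {A : Type*} (γ ρ : Setoid A) : Prop := ∀ u v : A, ρ.r u v → γ.r u v

/-- `γ ≈ ρ` : the partitions mutually refine each other. -/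
def PartEquiv {A : Type*} (γ ρ : Setoid A) : Prop := Refines γ ρ ∧ Refines ρ γ

/-- Invariance of a partition of `V^k` under `Sym(k)`. -/
def Invariant {k : ℕ} (γ : Setoid (Tup V k)) : Prop :=
  ∀ u v : Tup V k, γ.r u v → ∀ τ : Equiv.Perm (Fin k), γ.r (permTup τ u) (permTup τ v)

/-- `r`-consistency of a partition of `V^k`. -/
def Consistent [Nonempty V] {k : ℕ} (r : ℕ) (γ : Setoid (Tup V k)) : Prop :=
  ∀ u v : Tup V k, γ.r u v → ∀ j : Fin r → Fin k,
    (prPart r γ).r (prTup j u) (prTup j v)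

/-- Graph-like partitions of `V^k`. -/
def GraphLike [Nonempty V] {k : ℕ} (γ : Setoid (Tup V k)) : Prop :=
  Invariant γ ∧ (∀ r ≤ k, Consistent r γ) ∧
    ∀ u v : Tup V k, γ.r u v → ∀ i j : Fin k, u i = u j → v i = v j

/-- `{x ∈ V^r : γ(u⟨i,x⟩) = φ_i for all i ∈ [k]^(r)}`, where the colour tuple `φ` is
given by representatives. -/
def WLSet {k r : ℕ} (γ : Setoid (Tup V k)) (u : Tup V k)
    (φ : (Fin r → Fin k) → Tup V k) : Set (Tup V r) :=
  {x | ∀ i : Fin r → Fin k, Function.Injective i → γ.r (substTup u i x) (φ i)}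

/-- `{x ∈ V^r : γ(u⟨i,x⟩) = σ}`, where the colour `σ` is given by a representative `w`. -/
def CSet {k r : ℕ} (γ : Setoid (Tup V k)) (u : Tup V k)
    (i : Fin r → Fin k) (w : Tup V k) : Set (Tup V r) :=
  {x | γ.r (substTup u i x) w}

/-- `WL_{k,r}`-stability of a partition of `V^k`. -/
def WLStable {k : ℕ} (r : ℕ) (γ : Setoid (Tup V k)) : Prop :=
  r < k → ∀ u v : Tup V k, γ.r u v →
    ∀ φ : (Fin r → Fin k) → Tup V k, (WLSet γ u φ).ncard = (WLSet γ v φ).ncard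

/-- `C_{k,r}`-stability of a partition of `V^k`. -/
def CStable {k : ℕ} (r : ℕ) (γ : Setoid (Tup V k)) : Prop :=
  r < k → ∀ u v : Tup V k, γ.r u v →
    ∀ i : Fin r → Fin k, Function.Injective i → ∀ w : Tup V k,
      (CSet γ u i w).ncard = (CSet γ v i w).ncard

/-- The matrix `χ^{γ,v}_{i,σ}`, with the colour `σ` given by a representative `w`. -/
def chiMat (F : Type) [Field F] {k : ℕ} (γ : Setoid (Tup V k)) (v : Tup V k)
    (i : Fin 2 → Fin k) (w : Tup V k) : Matrix V V F :=
  Matrix.of fun x y => if γ.r (substTup v i ![x, y]) w then (1 : F) else 0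

/-- The matrix `χ^{γ,v}_φ`, with the colour tuple `φ` given by representatives. -/
def chiMatT (F : Type) [Field F] {k : ℕ} (γ : Setoid (Tup V k)) (v : Tup V k)
    (φ : (Fin 2 → Fin k) → Tup V k) : Matrix V V F :=
  Matrix.of fun x y =>
    if ∀ i : Fin 2 → Fin k, Function.Injective i → γ.r (substTup v i ![x, y]) (φ i)
    then (1 : F) else 0

/-- `IM_k^F`-stability of a partition of `V^k`. -/
def IMStable (F : Type) [Field F] [Fintype V] [DecidableEq V] {k : ℕ}
    (γ : Setoid (Tup V k)) : Prop :=
  2 < k → ∀ u v : Tup V k, γ.r u v →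
    ∀ i : Fin 2 → Fin k, Function.Injective i →
      ∃ S : (Matrix V V F)ˣ, ∀ w : Tup V k,
        (S : Matrix V V F) * chiMat F γ u i w * ((S⁻¹ : (Matrix V V F)ˣ) : Matrix V V F)
          = chiMat F γ v i w

/-- `IMt_k^F`-stability of a partition of `V^k`. -/
def IMtStable (F : Type) [Field F] [Fintype V] [DecidableEq V] {k : ℕ}
    (γ : Setoid (Tup V k)) : Prop :=
  2 < k → ∀ u v : Tup V k, γ.r u v →
    ∃ S : (Matrix V V F)ˣ, ∀ φ : (Fin 2 → Fin k) → Tup V k,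
      (S : Matrix V V F) * chiMatT F γ u φ * ((S⁻¹ : (Matrix V V F)ˣ) : Matrix V V F)
        = chiMatT F γ v φ

/-- The refinement operator `WL_{k,r}`. -/
def WLop {k : ℕ} (r : ℕ) (γ : Setoid (Tup V k)) : Setoid (Tup V k) :=
  if r < k then
    { r := fun u v => γ.r u v ∧ ∀ φ : (Fin r → Fin k) → Tup V k,
        (WLSet γ u φ).ncard = (WLSet γ v φ).ncard
      iseqv := by
        refine ⟨fun u => ⟨γ.iseqv.refl u, fun _ => rfl⟩, ?_, ?_⟩
        · rintro u v ⟨h1, h2⟩; exact ⟨γ.iseqv.symm h1, fun φ => (h2 φ).symm⟩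
        · rintro u v w ⟨h1, h2⟩ ⟨h1', h2'⟩
          exact ⟨γ.iseqv.trans h1 h1', fun φ => (h2 φ).trans (h2' φ)⟩ }
  else γ

/-- The refinement operator `C_{k,r}`. -/
def Cop {k : ℕ} (r : ℕ) (γ : Setoid (Tup V k)) : Setoid (Tup V k) :=
  if r < k then
    { r := fun u v => γ.r u v ∧ ∀ i : Fin r → Fin k, Function.Injective i →
        ∀ w : Tup V k, (CSet γ u i w).ncard = (CSet γ v i w).ncard
      iseqv := by
        refine ⟨fun u => ⟨γ.iseqv.refl u, fun _ _ _ => rfl⟩, ?_, ?_⟩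
        · rintro u v ⟨h1, h2⟩; exact ⟨γ.iseqv.symm h1, fun i hi w => (h2 i hi w).symm⟩
        · rintro u v w ⟨h1, h2⟩ ⟨h1', h2'⟩
          exact ⟨γ.iseqv.trans h1 h1', fun i hi x => (h2 i hi x).trans (h2' i hi x)⟩ }
  else γ


theorem conjRefl {M : Type*} [Monoid M] (A : M) :
    ((1 : Mˣ) : M) * A * (((1 : Mˣ)⁻¹ : Mˣ) : M) = A := by simp

theorem conjSymm {M : Type*} [Monoid M] (S : Mˣ) {A B : M}
    (h : (S : M) * A * ((S⁻¹ : Mˣ) : M) = B) :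
    ((S⁻¹ : Mˣ) : M) * B * (((S⁻¹)⁻¹ : Mˣ) : M) = A := by
  subst h
  rw [inv_inv]
  simp [mul_assoc, Units.inv_mul_cancel_left, Units.inv_mul]

theorem conjTrans {M : Type*} [Monoid M] (S T : Mˣ) {A B C : M}
    (h1 : (S : M) * A * ((S⁻¹ : Mˣ) : M) = B)
    (h2 : (T : M) * B * ((T⁻¹ : Mˣ) : M) = C) :
    ((T * S : Mˣ) : M) * A * (((T * S)⁻¹ : Mˣ) : M) = C := by
  subst h1; subst h2
  simp [Units.val_mul, _root_.mul_inv_rev, mul_assoc]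

/-- The refinement operator `IM_k^F`. -/
def IMop (F : Type) [Field F] [Fintype V] [DecidableEq V] {k : ℕ}
    (γ : Setoid (Tup V k)) : Setoid (Tup V k) :=
  if 2 < k then
    { r := fun u v => γ.r u v ∧ ∀ i : Fin 2 → Fin k, Function.Injective i →
        ∃ S : (Matrix V V F)ˣ, ∀ w : Tup V k,
          (S : Matrix V V F) * chiMat F γ u i w * ((S⁻¹ : (Matrix V V F)ˣ) : Matrix V V F)
            = chiMat F γ v i w
      iseqv := by
        refine ⟨fun u => ⟨γ.iseqv.refl u, fun i _ => ⟨1, fun w => conjRefl _⟩⟩, ?_, ?_⟩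
        · rintro u v ⟨h1, h2⟩
          refine ⟨γ.iseqv.symm h1, fun i hi => ?_⟩
          obtain ⟨S, hS⟩ := h2 i hi
          exact ⟨S⁻¹, fun w => conjSymm S (hS w)⟩
        · rintro u v w ⟨h1, h2⟩ ⟨h1', h2'⟩
          refine ⟨γ.iseqv.trans h1 h1', fun i hi => ?_⟩
          obtain ⟨S, hS⟩ := h2 i hi
          obtain ⟨T, hT⟩ := h2' i hi
          exact ⟨T * S, fun x => conjTrans S T (hS x) (hT x)⟩ }
  else γ

/-- The refinement operator `IMt_k^F`. -/
def IMtop (F : Type) [Field F] [Fintype V] [DecidableEq V] {k : ℕ}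
    (γ : Setoid (Tup V k)) : Setoid (Tup V k) :=
  if 2 < k then
    { r := fun u v => γ.r u v ∧
        ∃ S : (Matrix V V F)ˣ, ∀ φ : (Fin 2 → Fin k) → Tup V k,
          (S : Matrix V V F) * chiMatT F γ u φ * ((S⁻¹ : (Matrix V V F)ˣ) : Matrix V V F)
            = chiMatT F γ v φ
      iseqv := by
        refine ⟨fun u => ⟨γ.iseqv.refl u, ⟨1, fun φ => conjRefl _⟩⟩, ?_, ?_⟩
        · rintro u v ⟨h1, ⟨S, hS⟩⟩
          exact ⟨γ.iseqv.symm h1, ⟨S⁻¹, fun φ => conjSymm S (hS φ)⟩⟩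
        · rintro u v w ⟨h1, ⟨S, hS⟩⟩ ⟨h1', ⟨T, hT⟩⟩
          exact ⟨γ.iseqv.trans h1 h1', ⟨T * S, fun φ => conjTrans S T (hS φ) (hT φ)⟩⟩ }
  else γ

/-- Iterate a refinement operator `|V|^k` times, reaching its stable fixed point. -/
def stabilize [Fintype V] {k : ℕ} (R : Setoid (Tup V k) → Setoid (Tup V k))
    (γ : Setoid (Tup V k)) : Setoid (Tup V k) :=
  R^[Fintype.card V ^ k] γ

/-- A graph on `V` : a labelled partition of `V²` that is a rainbow. -/
def IsGraph (Γ : Setoid (Tup V 2)) : Prop :=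
  (∀ u x y : V, Γ.r ![u, u] ![x, y] → x = y) ∧
  (∀ u v u' v' : V, Γ.r ![u, v] ![u', v'] ↔ Γ.r ![v, u] ![v', u'])

/-- The atomic-type partition `α_{k,Γ}` of `V^k` determined by a graph `Γ`. -/
def atomicPart {k : ℕ} (Γ : Setoid (Tup V 2)) : Setoid (Tup V k) where
  r u v := ∀ i j : Fin k, i ≠ j → Γ.r ![u i, u j] ![v i, v j]
  iseqv := ⟨fun _ _ _ _ => Γ.iseqv.refl _, fun h i j hij => Γ.iseqv.symm (h i j hij),
    fun h h' i j hij => Γ.iseqv.trans (h i j hij) (h' i j hij)⟩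

/-- `WL̄_{k,r}(Γ)`. -/
def WLbarR [Nonempty V] [Fintype V] (k r : ℕ) (Γ : Setoid (Tup V 2)) : Setoid (Tup V 2) :=
  if k ≤ 1 then Γ else prPart 2 (stabilize (WLop (k := k) r) (atomicPart Γ))

/-- `C̄_{k,r}(Γ)`. -/
def CbarR [Nonempty V] [Fintype V] (k r : ℕ) (Γ : Setoid (Tup V 2)) : Setoid (Tup V 2) :=
  if k ≤ 1 then Γ else prPart 2 (stabilize (Cop (k := k) r) (atomicPart Γ))

/-- `WL̄_k(Γ) = WL̄_{k,1}(Γ)`. -/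
def WLbar [Nonempty V] [Fintype V] (k : ℕ) (Γ : Setoid (Tup V 2)) : Setoid (Tup V 2) :=
  WLbarR k 1 Γ

/-- `C̄_k(Γ) = C̄_{k,1}(Γ)`. -/
def Cbar [Nonempty V] [Fintype V] (k : ℕ) (Γ : Setoid (Tup V 2)) : Setoid (Tup V 2) :=
  CbarR k 1 Γ

/-- `IM̄_k^F(Γ)`. -/
def IMbar (F : Type) [Field F] [Nonempty V] [Fintype V] [DecidableEq V]
    (k : ℕ) (Γ : Setoid (Tup V 2)) : Setoid (Tup V 2) :=
  if k ≤ 1 then Γ else prPart 2 (stabilize (IMop (k := k) F) (atomicPart Γ))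

/-- `IMt̄_k^F(Γ)`. -/
def IMtbar (F : Type) [Field F] [Nonempty V] [Fintype V] [DecidableEq V]
    (k : ℕ) (Γ : Setoid (Tup V 2)) : Setoid (Tup V 2) :=
  if k ≤ 1 then Γ else prPart 2 (stabilize (IMtop (k := k) F) (atomicPart Γ))

/-- A nonempty finite set together with a graph on it. -/
structure FinGraph where
  V : Type
  [instFintype : Fintype V]
  [instDecEq : DecidableEq V]
  [instNonempty : Nonempty V]
  Γ : Setoid (Tup V 2)
  isGraph : IsGraph Γ

attribute [instance] FinGraph.instFintype FinGraph.instDecEq FinGraph.instNonempty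

/-! For `z ∈ V^k` let `T z y ∈ V^{k+2}` be the extension of `z` with `y` written at position
`i₀ < k` and at the last position `k + 1`. For a colour `σ` whose tuples agree at these two
positions (as graph-likeness forces), `χ^{γ,z}_{(i₀,k+1),σ}` is the diagonal matrix with
`#{y : γ(T z y) = σ}` ones; for the other colours that count is zero. IM-stability makes these
matrices conjugate for `z = u` and `z = v`, so their ranks agree, i.e. `y ↦ γ(T u y)` and
`y ↦ γ(T v y)` have fibres of equal size. By consistency, the colour of `z⟨i₀,y⟩` under `pr_k γ`
is determined by `γ(T z y)`, so the `C_k` counts of `u` and `v` agree. -/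

open Finset

section Counting

variable {α β : Type*} [Fintype α] [Fintype β]

theorem card_filter_comp_eq_of_card_fiber_eq [DecidableEq β] {f g : α → β}
    (h : ∀ b, #{a | f a = b} = #{a | g a = b}) (p : β → Prop) :
    #{a | p (f a)} = #{a | p (g a)} := by
  have sum_fibers : ∀ f : α → β, #{a | p (f a)} = ∑ b with p b, #{a | f a = b} := fun f => by
    rw [sum_card_fiberwise_eq_card_filter]
    simp
  rw [sum_fibers f, sum_fibers g]
  exact sum_congr rfl fun b _ => h b

theorem card_filter_comp_eq_of_card_rel_eq (s : Setoid β) {f g : α → β}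
    (h : ∀ b, #{a | s.r (f a) b} = #{a | s.r (g a) b}) {p : β → Prop}
    (hp : ∀ b b', s.r b b' → p b → p b') :
    #{a | p (f a)} = #{a | p (g a)} := by
  have hfiber : ∀ c : Quotient s,
      #{a | Quotient.mk s (f a) = c} = #{a | Quotient.mk s (g a) = c} := by
    refine Quotient.forall.mpr fun b => ?_
    simpa only [Quotient.eq] using h b
  exact card_filter_comp_eq_of_card_fiber_eq hfiber
    (Quotient.lift p fun b b' hb => propext ⟨hp b b' hb, hp b' b (s.iseqv.symm hb)⟩)

end Counting

namespace Matrix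

variable {n F : Type*} [Fintype n] [DecidableEq n] [Field F]

theorem rank_units_conj (S : (Matrix n n F)ˣ) (A : Matrix n n F) :
    ((S : Matrix n n F) * A * ((S⁻¹ : (Matrix n n F)ˣ) : Matrix n n F)).rank = A.rank := by
  rw [rank_mul_eq_left_of_isUnit_det _ _ ((isUnit_iff_isUnit_det _).mp (S⁻¹).isUnit),
    rank_mul_eq_right_of_isUnit_det _ _ ((isUnit_iff_isUnit_det _).mp S.isUnit)]

theorem rank_diagonal_ite_one_zero (p : n → Prop) :
    (diagonal fun x => if p x then (1 : F) else 0).rank = #{x | p x} := by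
  rw [rank_diagonal, Fintype.card_subtype]
  simp

end Matrix

theorem substTup_apply_mem {k r : ℕ} (v : Tup V k) {i : Fin r → Fin k}
    (hi : Function.Injective i) (x : Tup V r) (s : Fin r) :
    substTup v i x (i s) = x s := by
  have h : ∃ t, i t = i s := ⟨s, rfl⟩
  simp only [substTup, dif_pos h]
  exact congrArg x (hi h.choose_spec)

theorem substTup_apply_of_not_mem {k r : ℕ} (v : Tup V k) (i : Fin r → Fin k)
    (x : Tup V r) {j : Fin k} (h : ¬ ∃ s, i s = j) : substTup v i x j = v j := by
  simp only [substTup, dif_neg h]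

theorem extendTup_self [Nonempty V] {k : ℕ} (w : Tup V k) : extendTup k w = w := by
  funext m
  simp [extendTup, m.isLt]

theorem extendTup_eq_prTup [Nonempty V] {r : ℕ} (hr : 0 < r) (k : ℕ) (w : Tup V r) :
    extendTup k w = prTup (fun m : Fin k => ⟨min m (r - 1), by omega⟩) w := by
  funext m
  simp only [extendTup, prTup, dif_pos hr]
  split_ifs <;> congr 2 <;> omega

theorem Consistent.rel_prTup [Nonempty V] {k : ℕ} {γ : Setoid (Tup V k)} (hγ : Consistent k γ)
    {a b : Tup V k} (hab : γ.r a b) (j : Fin k → Fin k) : γ.r (prTup j a) (prTup j b) := by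
  have := hγ a b hab j
  change γ.r (extendTup k (prTup j a)) (extendTup k (prTup j b)) at this
  rwa [extendTup_self, extendTup_self] at this

theorem chiMat_eq_diagonal (F : Type) [Field F] [DecidableEq V] {k : ℕ} (γ : Setoid (Tup V k))
    (v : Tup V k) {i : Fin 2 → Fin k} (hi : Function.Injective i) {w : Tup V k}
    (hw : ∀ b, γ.r b w → b (i 0) = b (i 1)) :
    chiMat F γ v i w = diagonal fun y => if γ.r (substTup v i ![y, y]) w then 1 else 0 := by
  ext x y
  by_cases hxy : x = y
  · subst hxy
    rw [diagonal_apply_eq]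
    rfl
  · rw [diagonal_apply_ne _ hxy]
    refine if_neg fun hr => hxy ?_
    simpa [substTup_apply_mem _ hi] using hw _ hr

theorem IMStable.card_substTup_diag_eq [Fintype V] [DecidableEq V] {F : Type} [Field F] {k : ℕ}
    {γ : Setoid (Tup V k)} (hγ : IMStable F γ) (hk : 2 < k)
    (hpat : ∀ a b : Tup V k, γ.r a b → ∀ s t, a s = a t → b s = b t)
    {u v : Tup V k} (huv : γ.r u v) {i : Fin 2 → Fin k} (hi : Function.Injective i)
    (w : Tup V k) :
    #{y | γ.r (substTup u i ![y, y]) w} = #{y | γ.r (substTup v i ![y, y]) w} := by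
  by_cases hw : w (i 0) = w (i 1)
  · obtain ⟨S, hS⟩ := hγ hk u v huv i hi
    have hdiag : ∀ b, γ.r b w → b (i 0) = b (i 1) :=
      fun b hb => hpat w b (γ.iseqv.symm hb) _ _ hw
    calc #{y | γ.r (substTup u i ![y, y]) w}
        = (chiMat F γ u i w).rank := by
          rw [chiMat_eq_diagonal F γ u hi hdiag, rank_diagonal_ite_one_zero]
      _ = (chiMat F γ v i w).rank := by rw [← hS w, rank_units_conj]
      _ = #{y | γ.r (substTup v i ![y, y]) w} := by
          rw [chiMat_eq_diagonal F γ v hi hdiag, rank_diagonal_ite_one_zero]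
  · have hempty : ∀ z : Tup V k, #{y | γ.r (substTup z i ![y, y]) w} = 0 := fun z => by
      rw [card_eq_zero, filter_eq_empty_iff]
      refine fun y _ hy => hw (hpat _ _ hy _ _ ?_)
      simp [substTup_apply_mem _ hi]
    rw [hempty, hempty]

theorem Fin.castAdd_two_lt_natAdd_one {k : ℕ} (j : Fin k) :
    Fin.castAdd 2 j < Fin.natAdd k 1 := by
  rw [Fin.lt_def, Fin.val_castAdd, Fin.val_natAdd]
  omega

theorem injective_castAdd_natAdd {k : ℕ} (j : Fin k) :
    Function.Injective ![Fin.castAdd 2 j, Fin.natAdd k 1] :=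
  injective_pair_iff_ne.mpr (Fin.castAdd_two_lt_natAdd_one j).ne

theorem prTup_castAdd_substTup_extendTup [Nonempty V] {k : ℕ} (z : Tup V k)
    (i : Fin 1 → Fin k) (x : Tup V 1) :
    prTup (Fin.castAdd 2)
        (substTup (extendTup (k + 2) z) ![Fin.castAdd 2 (i 0), Fin.natAdd k 1] ![x 0, x 0])
      = substTup z i x := by
  funext j
  by_cases hj : i 0 = j
  · subst hj
    rw [substTup_apply_mem z (Function.injective_of_subsingleton i)]
    exact substTup_apply_mem _ (injective_castAdd_natAdd (i 0)) _ 0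
  · rw [substTup_apply_of_not_mem z i x fun ⟨s, hs⟩ => hj (by rwa [Subsingleton.elim s 0] at hs)]
    refine (substTup_apply_of_not_mem _ _ _ ?_).trans (by simp [extendTup])
    rintro ⟨s, hs⟩
    fin_cases s
    · exact hj (Fin.castAdd_injective _ _ hs)
    · exact (Fin.castAdd_two_lt_natAdd_one j).ne' hs

/-- The `k`-projection of a graph-like `IM_{k+2}^F`-stable partition is `C_k`-stable. -/
theorem im_stable_proj_c_stable (F : Type) [Field F] (V : Type) [Fintype V]
    [DecidableEq V] [Nonempty V] (k : ℕ) (γ : Setoid (Tup V (k + 2)))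
    (hγ : GraphLike γ) (h : IMStable F γ) : CStable 1 (prPart k γ) := by
  intro hk u v huv i _ w
  let T : Tup V k → V → Tup V (k + 2) := fun z y =>
    substTup (extendTup (k + 2) z) ![Fin.castAdd 2 (i 0), Fin.natAdd k 1] ![y, y]
  -- `extendTup (k + 2) (substTup z i x)` is read off from `T z (x 0)` through `clamp`
  let clamp : Fin (k + 2) → Fin (k + 2) := fun m => Fin.castAdd 2 ⟨min m (k - 1), by omega⟩
  let p : Tup V (k + 2) → Prop := fun b => γ.r (prTup clamp b) (extendTup (k + 2) w)
  have hp : ∀ b b', γ.r b b' → p b → p b' := fun b b' hb hpb =>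
    γ.iseqv.trans (γ.iseqv.symm ((hγ.2.1 _ le_rfl).rel_prTup hb clamp)) hpb
  have hCSet : ∀ z,
      CSet (prPart k γ) z i w = (Equiv.funUnique (Fin 1) V) ⁻¹' {y | p (T z y)} := by
    intro z
    ext x
    change γ.r (extendTup _ _) _ ↔ γ.r _ _
    rw [extendTup_eq_prTup (by omega), ← prTup_castAdd_substTup_extendTup]
    rfl
  have hcard : ∀ z, (CSet (prPart k γ) z i w).ncard = #{y | p (T z y)} := by
    intro z
    rw [hCSet, Set.ncard_preimage_of_injective_subset_range (Equiv.injective _) (by simp),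
      Set.ncard_eq_toFinset_card', Set.toFinset_ofPred]
  rw [hcard u, hcard v]
  exact card_filter_comp_eq_of_card_rel_eq γ
    (h.card_substTup_diag_eq (by omega) hγ.2.2 huv (injective_castAdd_natAdd (i 0))) hp

end
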